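/- arXiv:2103.16723 — 2 statements merged into one kernel-verified Lean document; each statement's English description precedes it below -/
import Mathlib

section
/- Let m ≥ 2. The set of numerical semigroups with concentration 2, multiplicity m, and genus exactly m equals {Δ(m) \ {m + i} | i ∈ {1, ..., m-1}}, where Δ(m) = {0} ∪ {m, m+1, ...}. -/
open Set

/-- A numerical semigroup: contains 0, closed under addition, finite complement. -/
def IsNumSgp (S : Set ℕ) : Prop :=
  0 ∈ S ∧ (∀ a ∈ S, ∀ b ∈ S, a + b ∈ S) ∧ (Sᶜ : Set ℕ).Finite

/-- The multiplicity: least positive element. -/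
noncomputable def mult (S : Set ℕ) : ℕ := sInf {n | n ∈ S ∧ n ≠ 0}

/-- next_S(s) = min { x ∈ S | s < x }. -/
noncomputable def nextS (S : Set ℕ) (s : ℕ) : ℕ := sInf {x | x ∈ S ∧ s < x}

/-- The concentration C(S) = max { next_S(s) - s | s ∈ S \ {0} }. -/
noncomputable def conc (S : Set ℕ) : ℕ :=
  sSup {d | ∃ s ∈ S, s ≠ 0 ∧ d = nextS S s - s}

/-- The Frobenius number: largest gap. -/
noncomputable def frob (S : Set ℕ) : ℕ := sSup (Sᶜ : Set ℕ)

/-- The genus: number of gaps. -/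
noncomputable def genus (S : Set ℕ) : ℕ := (Sᶜ : Set ℕ).ncard

/-- x is a minimal generator of S. -/
def IsMinGen (S : Set ℕ) (x : ℕ) : Prop :=
  x ∈ S ∧ x ≠ 0 ∧ ¬∃ a ∈ S, ∃ b ∈ S, a ≠ 0 ∧ b ≠ 0 ∧ a + b = x

/-- The embedding dimension: number of minimal generators. -/
noncomputable def edim (S : Set ℕ) : ℕ := {x | IsMinGen S x}.ncard

/-- n(S): the number of elements of S smaller than the Frobenius number. -/
noncomputable def nS (S : Set ℕ) : ℕ := {s | s ∈ S ∧ s < frob S}.ncard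

/-- The half-line Δ(m) = {0} ∪ {m, m+1, ...}. -/
def Delta (m : ℕ) : Set ℕ := {0} ∪ {n | m ≤ n}

def IsHalfLine (S : Set ℕ) : Prop := ∃ m, S = Delta m

/-- An irreducible numerical semigroup. -/
def Irred (S : Set ℕ) : Prop :=
  ¬∃ T₁ T₂ : Set ℕ, IsNumSgp T₁ ∧ IsNumSgp T₂ ∧ S ⊂ T₁ ∧ S ⊂ T₂ ∧ S = T₁ ∩ T₂

/-
A numerical semigroup `S` of multiplicity `m` has the `m - 1` gaps `1, …, m - 1`, so genus `m`
leaves room for exactly one further gap `g > m`. Since `g - m` and `m` cannot both lie in `S`,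
`g - m` is itself a gap, which forces `g < 2m`; hence `S = Δ(m) \ {g}`. Conversely each such
set is a numerical semigroup of multiplicity and genus `m`, and its only jump of length two is
the one over the removed element `g`.
-/

lemma mem_Delta_iff {m n : ℕ} : n ∈ Delta m ↔ n = 0 ∨ m ≤ n := by
  simp [Delta]

lemma mult_le_of_mem {S : Set ℕ} {n : ℕ} (hn : n ∈ S) (hn0 : n ≠ 0) : mult S ≤ n :=
  Nat.sInf_le ⟨hn, hn0⟩

lemma Ioo_zero_mult_subset_compl (S : Set ℕ) : Ioo 0 (mult S) ⊆ Sᶜ :=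
  fun _ hn hnS => (mult_le_of_mem hnS hn.1.ne').not_gt hn.2

lemma nextS_le {S : Set ℕ} {s x : ℕ} (hx : x ∈ S) (hsx : s < x) : nextS S s ≤ x :=
  Nat.sInf_le ⟨hx, hsx⟩

lemma nextS_eq_add_two {S : Set ℕ} {s : ℕ} (h1 : s + 1 ∉ S) (h2 : s + 2 ∈ S) :
    nextS S s = s + 2 :=
  le_antisymm (nextS_le h2 (by omega)) <|
    le_csInf ⟨s + 2, h2, by omega⟩ fun x ⟨hx, hsx⟩ => by
      have : x ≠ s + 1 := fun h => h1 (h ▸ hx)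
      omega

lemma conc_eq_two {S : Set ℕ} (hstep : ∀ s ∈ S, s ≠ 0 → s + 1 ∈ S ∨ s + 2 ∈ S)
    {s₀ : ℕ} (hs₀ : s₀ ∈ S) (hs₀0 : s₀ ≠ 0) (h1 : s₀ + 1 ∉ S) (h2 : s₀ + 2 ∈ S) :
    conc S = 2 := by
  refine IsGreatest.csSup_eq ⟨⟨s₀, hs₀, hs₀0, by rw [nextS_eq_add_two h1 h2]; omega⟩, ?_⟩
  rintro _ ⟨s, hs, hs0, rfl⟩
  rcases hstep s hs hs0 with h | h
  · have : nextS S s ≤ s + 1 := nextS_le h (by omega)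
    omega
  · have : nextS S s ≤ s + 2 := nextS_le h (by omega)
    omega

namespace IsNumSgp

variable {S : Set ℕ} (hS : IsNumSgp S)
include hS

lemma mult_mem_and_ne_zero : mult S ∈ S ∧ mult S ≠ 0 := by
  obtain ⟨b, hb⟩ := hS.2.2.bddAbove
  have hb1 : b + 1 ∈ S := not_not.mp fun h => (hb h).not_gt (lt_add_one b)
  exact Nat.sInf_mem (s := {n | n ∈ S ∧ n ≠ 0}) ⟨b + 1, hb1, b.succ_ne_zero⟩

lemma exists_compl_eq_insert_Ioo (hg : genus S = mult S) :
    ∃ g ∉ Ioo 0 (mult S), Sᶜ = insert g (Ioo 0 (mult S)) := by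
  have hsub := Ioo_zero_mult_subset_compl S
  have hcard : (Sᶜ \ Ioo 0 (mult S)).ncard = 1 := by
    rw [ncard_sdiff hsub, ncard_Ioo_nat, ← genus, hg]
    have := hS.mult_mem_and_ne_zero.2
    omega
  obtain ⟨g, hg⟩ := ncard_eq_one.mp hcard
  have hgmem : g ∈ Sᶜ \ Ioo 0 (mult S) := hg ▸ rfl
  exact ⟨g, hgmem.2, by rw [← union_sdiff_cancel hsub, hg, union_singleton]⟩

lemma exists_eq_Delta_diff_of_genus_eq_mult (hg : genus S = mult S) :
    ∃ g, mult S < g ∧ g < 2 * mult S ∧ S = Delta (mult S) \ {g} := by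
  obtain ⟨g, hgIoo, hcompl⟩ := hS.exists_compl_eq_insert_Ioo hg
  obtain ⟨hmS, hm0⟩ := hS.mult_mem_and_ne_zero
  set m := mult S
  have hmem : ∀ n, n ∈ S ↔ n ≠ g ∧ (n = 0 ∨ m ≤ n) := fun n => by
    rw [← notMem_compl_iff, hcompl, mem_insert_iff, mem_Ioo]
    omega
  have hmg : m < g := by
    have := (hmem 0).mp hS.1
    have := (hmem m).mp hmS
    simp only [mem_Ioo, not_and, not_lt] at hgIoo
    omega
  refine ⟨g, hmg, ?_, ?_⟩
  · by_contra! h2m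
    have hgm : g - m ∈ S := (hmem _).mpr ⟨by omega, by omega⟩
    have := (hmem g).mp (Nat.sub_add_cancel hmg.le ▸ hS.2.1 _ hgm _ hmS)
    exact this.1 rfl
  · ext n
    rw [hmem, mem_sdiff, mem_Delta_iff, mem_singleton_iff]
    tauto

end IsNumSgp

section DeltaDiff

variable {m i : ℕ}

lemma mem_Delta_diff_iff {n : ℕ} : n ∈ Delta m \ {m + i} ↔ (n = 0 ∨ m ≤ n) ∧ n ≠ m + i := by
  rw [mem_sdiff, mem_Delta_iff, mem_singleton_iff]

lemma isNumSgp_Delta_diff (hi : i < m) : IsNumSgp (Delta m \ {m + i}) := by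
  have hcompl : (Delta m \ {m + i})ᶜ ⊆ insert (m + i) (Iio m) := fun n hn => by
    rw [mem_compl_iff, mem_Delta_diff_iff] at hn
    rw [mem_insert_iff, mem_Iio]
    omega
  refine ⟨mem_Delta_diff_iff.mpr ⟨Or.inl rfl, by omega⟩, fun a ha b hb => ?_,
    ((finite_Iio m).insert _).subset hcompl⟩
  rw [mem_Delta_diff_iff] at ha hb ⊢
  omega

lemma mult_Delta_diff (hm : m ≠ 0) (hi : i ≠ 0) : mult (Delta m \ {m + i}) = m :=
  IsLeast.csInf_eq ⟨⟨mem_Delta_diff_iff.mpr ⟨Or.inr le_rfl, by omega⟩, hm⟩,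
    fun n ⟨hn, hn0⟩ => by rw [mem_Delta_diff_iff] at hn; omega⟩

lemma genus_Delta_diff (hm : m ≠ 0) : genus (Delta m \ {m + i}) = m := by
  have hcompl : (Delta m \ {m + i})ᶜ = insert (m + i) (Ioo 0 m) := by
    ext n
    rw [mem_compl_iff, mem_Delta_diff_iff, mem_insert_iff, mem_Ioo]
    omega
  rw [genus, hcompl, ncard_insert_of_notMem (by simp), ncard_Ioo_nat]
  omega

lemma conc_Delta_diff (hm : m ≠ 0) (hi : i ≠ 0) : conc (Delta m \ {m + i}) = 2 := by
  refine conc_eq_two (s₀ := m + i - 1) (fun s hs hs0 => ?_) ?_ (by omega) ?_ ?_ <;>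
    simp only [mem_Delta_diff_iff] at * <;> omega

end DeltaDiff

theorem stmt9_general (m : ℕ) :
    {S : Set ℕ | IsNumSgp S ∧ conc S = 2 ∧ mult S = m ∧ genus S = m} =
      {T : Set ℕ | ∃ i : ℕ, 1 ≤ i ∧ i ≤ m - 1 ∧ T = Delta m \ {m + i}} := by
  ext S
  constructor
  · rintro ⟨hS, -, rfl, hgen⟩
    obtain ⟨g, hmg, hg2m, hSg⟩ := hS.exists_eq_Delta_diff_of_genus_eq_mult hgen
    exact ⟨g - mult S, by omega, by omega, by rwa [Nat.add_sub_cancel' hmg.le]⟩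
  · rintro ⟨i, hi1, him, rfl⟩
    exact ⟨isNumSgp_Delta_diff (by omega), conc_Delta_diff (by omega) (by omega),
      mult_Delta_diff (by omega) (by omega), genus_Delta_diff (by omega)⟩

theorem stmt9 (m : ℕ) (hm : 2 ≤ m) :
    {S : Set ℕ | IsNumSgp S ∧ conc S = 2 ∧ mult S = m ∧ genus S = m} =
      {T : Set ℕ | ∃ i : ℕ, 1 ≤ i ∧ i ≤ m - 1 ∧ T = Delta m \ {m + i}} :=
  stmt9_general m
end

section
/- Let m ≥ 2. The set of numerical semigroups with concentration 2 and multiplicity m is finite if and only if m is odd. -/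
open Set

/-!
If `m` is odd, the successor `c` of `m` in `S` is `m + 1` or `m + 2`, hence coprime to `m`, so
by the Chicken McNugget theorem `S ⊇ ⟨m, c⟩` contains every integer `≥ m (m + 2)`; such an `S` is
determined by its finitely many elements below `m (m + 2)`. If `m` is even, the semigroups
`{0, m, m + 2, …, m + 2k} ∪ [m + 2k + 2, ∞)` are pairwise distinct, have multiplicity `m` and
concentration `2`.
-/

namespace IsNumSgp

variable {S : Set ℕ}

def toAddSubmonoid (hS : IsNumSgp S) : AddSubmonoid ℕ where
  carrier := S
  add_mem' ha hb := hS.2.1 _ ha _ hb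
  zero_mem' := hS.1

theorem mem_of_coprime {a b n : ℕ} (hS : IsNumSgp S) (ha : a ∈ S) (hb : b ∈ S)
    (cop : Nat.Coprime a b) (ha1 : 1 < a) (hb1 : 1 < b) (hn : a * b - a - b < n) : n ∈ S :=
  have hclosure : AddSubmonoid.closure {a, b} ≤ hS.toAddSubmonoid :=
    AddSubmonoid.closure_le.mpr (pair_subset ha hb)
  hclosure ((frobeniusNumber_iff.mp (frobeniusNumber_pair cop ha1 hb1)).2 n hn)

theorem mem_of_frob_lt {n : ℕ} (hS : IsNumSgp S) (hn : frob S < n) : n ∈ S := by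
  by_contra hnS
  exact (le_csSup hS.2.2.bddAbove hnS).not_gt hn

theorem isLeast_mult (hS : IsNumSgp S) : IsLeast {n | n ∈ S ∧ n ≠ 0} (mult S) :=
  isLeast_csInf ⟨frob S + 1, hS.mem_of_frob_lt (Nat.lt_succ_self _), Nat.succ_ne_zero _⟩

theorem isLeast_nextS (hS : IsNumSgp S) (s : ℕ) : IsLeast {x | x ∈ S ∧ s < x} (nextS S s) :=
  isLeast_csInf ⟨max s (frob S) + 1, hS.mem_of_frob_lt (by omega), by omega⟩

theorem nextS_sub_le_conc {s : ℕ} (hS : IsNumSgp S) (hs : s ∈ S) (hs0 : s ≠ 0) :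
    nextS S s - s ≤ conc S := by
  refine le_csSup ⟨frob S + 1, ?_⟩ ⟨s, hs, hs0, rfl⟩
  rintro _ ⟨t, -, -, rfl⟩
  have : nextS S t ≤ max t (frob S) + 1 :=
    (hS.isLeast_nextS t).2 ⟨hS.mem_of_frob_lt (by omega), by omega⟩
  omega

theorem mem_of_odd_mult {n : ℕ} (hS : IsNumSgp S) (hc : conc S ≤ 2) (hm : 2 ≤ mult S)
    (hodd : Odd (mult S)) (hn : mult S * (mult S + 2) ≤ n) : n ∈ S := by
  obtain ⟨⟨hmS, -⟩, -⟩ := hS.isLeast_mult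
  obtain ⟨⟨hcS, hmc⟩, -⟩ := hS.isLeast_nextS (mult S)
  have hcm : nextS S (mult S) ≤ mult S + 2 := by
    have := hS.nextS_sub_le_conc hmS (by omega)
    omega
  have cop : Nat.Coprime (mult S) (nextS S (mult S)) := by
    obtain ⟨d, hd, hcd⟩ : ∃ d, (d = 1 ∨ d = 2) ∧ nextS S (mult S) = mult S + d :=
      ⟨_, by omega, (Nat.add_sub_of_le hmc.le).symm⟩
    rw [hcd]
    rcases hd with rfl | rfl
    · exact Nat.coprime_self_add_right.mpr (Nat.coprime_one_right _)
    · exact Nat.coprime_self_add_right.mpr hodd.coprime_two_right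
  refine hS.mem_of_coprime hmS hcS cop (by omega) (by omega) ?_
  have := Nat.mul_le_mul_left (mult S) hcm
  have := Nat.mul_pos (by omega : 0 < mult S) (by omega : 0 < nextS S (mult S))
  omega

end IsNumSgp

theorem conc_le_of_add_mem {S : Set ℕ} {d : ℕ} (hd : 0 < d) (h : ∀ s ∈ S, s ≠ 0 → s + d ∈ S) :
    conc S ≤ d := by
  refine csSup_le' ?_
  rintro _ ⟨s, hs, hs0, rfl⟩
  have : nextS S s ≤ s + d := Nat.sInf_le ⟨h s hs hs0, by omega⟩
  omega

theorem finite_setOf_Ici_subset (B : ℕ) : {S : Set ℕ | Ici B ⊆ S}.Finite := by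
  refine ((finite_Iio B).finite_subsets.image (· ∪ Ici B)).subset fun S hS => ?_
  refine ⟨S ∩ Iio B, inter_subset_right, ?_⟩
  ext n
  by_cases hn : n < B
  · simp [hn]
  · simp [hn, hS (not_lt.mp hn), not_lt.mp hn]

def evenSgp (m k : ℕ) : Set ℕ := {0} ∪ {n | m ≤ n ∧ (2 ∣ n ∨ m + 2 * k + 2 ≤ n)}

theorem mem_evenSgp {m k n : ℕ} :
    n ∈ evenSgp m k ↔ n = 0 ∨ m ≤ n ∧ (2 ∣ n ∨ m + 2 * k + 2 ≤ n) := Iff.rfl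

theorem isNumSgp_evenSgp (m k : ℕ) : IsNumSgp (evenSgp m k) := by
  refine ⟨Or.inl rfl, fun a ha b hb => ?_, (finite_Iio (m + 2 * k + 2)).subset fun n hn => ?_⟩
  · rw [mem_evenSgp] at ha hb ⊢
    omega
  · simp only [mem_compl_iff, mem_evenSgp] at hn
    simp only [mem_Iio]
    omega

theorem mult_evenSgp {m : ℕ} (k : ℕ) (hm : m ≠ 0) (heven : 2 ∣ m) : mult (evenSgp m k) = m :=
  IsLeast.csInf_eq ⟨⟨Or.inr ⟨le_rfl, Or.inl heven⟩, hm⟩, fun n ⟨hn, hn0⟩ => by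
    rw [mem_evenSgp] at hn
    omega⟩

theorem conc_evenSgp {m : ℕ} (k : ℕ) (hm : m ≠ 0) (heven : 2 ∣ m) : conc (evenSgp m k) = 2 := by
  have hmS : m ∈ evenSgp m k := Or.inr ⟨le_rfl, Or.inl heven⟩
  have hnext : nextS (evenSgp m k) m = m + 2 :=
    IsLeast.csInf_eq ⟨⟨by rw [mem_evenSgp]; omega, by omega⟩, fun n ⟨hn, hmn⟩ => by
      rw [mem_evenSgp] at hn
      omega⟩
  refine le_antisymm (conc_le_of_add_mem two_pos fun s hs hs0 => ?_) ?_
  · rw [mem_evenSgp] at hs ⊢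
    omega
  · have := (isNumSgp_evenSgp m k).nextS_sub_le_conc hmS hm
    omega

theorem evenSgp_injective (m : ℕ) : Function.Injective (evenSgp m) := by
  -- the least odd element of `evenSgp m k` is the first odd number `≥ m + 2k + 2`
  have key : ∀ k j, evenSgp m k = evenSgp m j → j ≤ k := by
    intro k j h
    have hodd : m + 2 * k + 2 + (m + 1) % 2 ∈ evenSgp m k := by
      rw [mem_evenSgp]
      omega
    rw [h, mem_evenSgp] at hodd
    omega
  exact fun k j h => le_antisymm (key j k h.symm) (key k j h)

theorem stmt11 (m : ℕ) (hm : 2 ≤ m) :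
    {S : Set ℕ | IsNumSgp S ∧ conc S = 2 ∧ mult S = m}.Finite ↔ Odd m := by
  refine ⟨fun hfin => ?_, fun hodd => ?_⟩
  · by_contra hodd
    have heven : 2 ∣ m := (Nat.not_odd_iff_even.mp hodd).two_dvd
    refine infinite_of_injective_forall_mem (evenSgp_injective m) (fun k => ?_) hfin
    exact ⟨isNumSgp_evenSgp m k, conc_evenSgp k (by omega) heven, mult_evenSgp k (by omega) heven⟩
  · refine (finite_setOf_Ici_subset (m * (m + 2))).subset ?_
    rintro S ⟨hS, hc, rfl⟩ n hn
    exact hS.mem_of_odd_mult hc.le hm hodd hn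
end
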